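/- arXiv:1610.00078 — 6 statements merged into one kernel-verified Lean document; each statement's English description precedes it below -/
import Mathlib

section
/- Let X be a metric space with dim_H(X) < ∞. Then the local Hausdorff measure H_loc (Carathéodory construction with weight τ(U) = |U|^{dim_H(U)} over arbitrary covers) and the local open spherical measure λ_loc (same weight but covers by open balls) are strongly equivalent: H_loc ≤ λ_loc ≤ 4^{dim_H(X)} H_loc. -/
open Set MeasureTheory ENNReal Classical

/-- Extended-real power `a ^ b` for `a b : ℝ≥0∞`, extending `rpow` by continuity in the
exponent: `a ^ ∞ = 0` for `a < 1`, `1 ^ ∞ = 1`, and `a ^ ∞ = ∞` for `a > 1`. -/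
noncomputable def epow (a b : ℝ≥0∞) : ℝ≥0∞ :=
  if b = ⊤ then (if a < 1 then 0 else if a = 1 then 1 else ⊤) else a ^ b.toReal

/-- The local Hausdorff measure: the Carathéodory metric measure with weight
`τ(U) = |U|^{dim_H U}` over arbitrary covers. -/
noncomputable def locHausdorff (X : Type*) [MetricSpace X] [MeasurableSpace X]
    [BorelSpace X] : Measure X :=
  Measure.mkMetric' (fun U => epow (EMetric.diam U) (dimH U))

/-- The local open spherical measure: same weight, but covers by open balls only. -/
noncomputable def locSpherical (X : Type*) [MetricSpace X] [MeasurableSpace X]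
    [BorelSpace X] : Measure X :=
  Measure.mkMetric'
    (fun U => if ∃ x : X, ∃ r : ℝ≥0∞, U = EMetric.ball x r then
      epow (EMetric.diam U) (dimH U) else ⊤)

lemma epow_of_ne_top (a : ℝ≥0∞) {b : ℝ≥0∞} (hb : b ≠ ⊤) : epow a b = a ^ b.toReal :=
  if_neg hb

/-- Monotonicity of `OuterMeasure.mkMetric'` in the weight function. -/
lemma mkMetric'_mono_weight {X : Type*} [EMetricSpace X] {m₁ m₂ : Set X → ℝ≥0∞}
    (h : ∀ s, m₁ s ≤ m₂ s) :
    (OuterMeasure.mkMetric' m₁ : OuterMeasure X) ≤ OuterMeasure.mkMetric' m₂ := by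
  refine iSup₂_mono fun r hr => ?_
  exact OuterMeasure.mkMetric'.le_pre.2 fun s hs =>
    (OuterMeasure.mkMetric'.pre_le hs).trans (h s)

/-- If `dim_H X < ∞` then the local Hausdorff measure and the local open spherical
measure are strongly equivalent: `H_loc ≤ λ_loc ≤ 4^{dim_H X} H_loc`. -/
theorem locHausdorff_strongEquiv_locSpherical {X : Type*} [MetricSpace X]
    [MeasurableSpace X] [BorelSpace X] (hX : dimH (univ : Set X) < ⊤)
    (A : Set X) (hA : MeasurableSet A) :
    locHausdorff X A ≤ locSpherical X A ∧
    locSpherical X A ≤ (4 : ℝ≥0∞) ^ (dimH (univ : Set X)).toReal * locHausdorff X A := by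
  set D : ℝ≥0∞ := dimH (univ : Set X) with hD
  have hDne : D ≠ ⊤ := hX.ne
  set c : ℝ≥0∞ := (4 : ℝ≥0∞) ^ D.toReal with hc
  have hc0 : c ≠ 0 := (ENNReal.rpow_pos (by norm_num) (by norm_num)).ne'
  have hctop : c ≠ ⊤ := ENNReal.rpow_ne_top_of_nonneg ENNReal.toReal_nonneg (by norm_num)
  have hone_le_c : (1 : ℝ≥0∞) ≤ c := by
    calc (1 : ℝ≥0∞) = (4 : ℝ≥0∞) ^ (0 : ℝ) := by rw [ENNReal.rpow_zero]
    _ ≤ c := ENNReal.rpow_le_rpow_of_exponent_le (by norm_num) ENNReal.toReal_nonneg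
  set τH : Set X → ℝ≥0∞ := fun U => epow (EMetric.diam U) (dimH U) with hτH
  set τS : Set X → ℝ≥0∞ := fun U =>
    if ∃ x : X, ∃ r : ℝ≥0∞, U = EMetric.ball x r then
      epow (EMetric.diam U) (dimH U) else ⊤ with hτS
  -- the outer-measure level inequalities
  have hdimne : ∀ t : Set X, dimH t ≠ ⊤ := fun t =>
    ((dimH_mono (subset_univ t)).trans_lt hX).ne
  -- key claim: for 0 < r ≤ 1, pre τS r ≤ c • pre τH (r / 4)
  have key : ∀ r : ℝ≥0∞, 0 < r → r ≤ 1 →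
      OuterMeasure.mkMetric'.pre τS r ≤ c • OuterMeasure.mkMetric'.pre τH (r / 4) := by
    intro r hr0 hr1
    have hrtop : r ≠ ⊤ := (hr1.trans_lt (by norm_num)).ne
    rw [show OuterMeasure.mkMetric'.pre τH (r / 4)
        = OuterMeasure.boundedBy (extend fun s (_ : EMetric.diam s ≤ r / 4) => τH s) from rfl,
      OuterMeasure.smul_boundedBy hctop]
    refine OuterMeasure.le_boundedBy.2 fun t => ?_
    simp only [Pi.smul_apply, smul_eq_mul, extend]
    by_cases ht : EMetric.diam t ≤ r / 4
    · rw [iInf_eq_if, if_pos ht]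
      rcases t.eq_empty_or_nonempty with rfl | ⟨x, hx⟩
      · simp
      -- t is nonempty, diam t ≤ r/4
      by_cases hdim : dimH t = 0
      · -- use the ball of radius r/2
        have hsub : t ⊆ EMetric.ball x (r / 2) := by
          intro y hy
          refine EMetric.mem_ball.2 (lt_of_le_of_lt
            ((EMetric.edist_le_diam_of_mem hy hx).trans ht) ?_)
          have h2 : r / 2 / 2 < r / 2 :=
            ENNReal.half_lt_self (by simp [hr0.ne'])
              (by simp [ENNReal.div_eq_top, hrtop])
          have h24 : r / 4 = r / 2 / 2 := by
            rw [div_eq_mul_inv, div_eq_mul_inv, div_eq_mul_inv, mul_assoc,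
              ← ENNReal.mul_inv (by norm_num) (by norm_num)]
            norm_num
          rw [h24]; exact h2
        have hdiamB : EMetric.diam (EMetric.ball x (r / 2)) ≤ r := by
          refine (EMetric.diam_ball).trans ?_
          rw [ENNReal.mul_div_cancel' (by norm_num) (by norm_num)]
        have h1 : OuterMeasure.mkMetric'.pre τS r t
            ≤ τS (EMetric.ball x (r / 2)) :=
          ((OuterMeasure.mkMetric'.pre τS r).mono hsub).trans
            (OuterMeasure.mkMetric'.pre_le hdiamB)
        have h2 : τS (EMetric.ball x (r / 2)) ≤ 1 := by
          have hball : ∃ x' : X, ∃ r' : ℝ≥0∞,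
              EMetric.ball x (r / 2) = EMetric.ball x' r' := ⟨x, r / 2, rfl⟩
          simp only [hτS]
          rw [if_pos hball, epow_of_ne_top _ (hdimne _)]
          exact ENNReal.rpow_le_one (hdiamB.trans hr1) ENNReal.toReal_nonneg
        have h3 : τH t = 1 := by
          simp only [hτH]
          rw [epow_of_ne_top _ (hdimne _), hdim]
          simp [ENNReal.rpow_zero]
        rw [h3, mul_one]
        exact (h1.trans h2).trans hone_le_c
      · -- dimH t > 0, so diam t > 0
        have hd0 : EMetric.diam t ≠ 0 := by
          intro h0
          exact hdim (dimH_subsingleton (EMetric.diam_eq_zero_iff.1 h0))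
        set d : ℝ≥0∞ := EMetric.diam t with hd
        have hdr : d ≤ r := by
          refine ht.trans ?_
          rw [div_eq_mul_inv]
          exact mul_le_of_le_one_right' (by norm_num)
        have hd1 : d ≤ 1 := hdr.trans hr1
        have hdtop : d ≠ ⊤ := (hd1.trans_lt (by norm_num)).ne
        have hsub : t ⊆ EMetric.ball x (2 * d) := by
          intro y hy
          refine EMetric.mem_ball.2 (lt_of_le_of_lt (EMetric.edist_le_diam_of_mem hy hx) ?_)
          have hdpos : (0 : ℝ≥0∞) < d := pos_iff_ne_zero.2 hd0
          calc d = d + 0 := (add_zero d).symm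
          _ < d + d := ENNReal.add_lt_add_left hdtop hdpos
          _ = 2 * d := (two_mul d).symm
        have h4d : 4 * d ≤ r := by
          calc (4 : ℝ≥0∞) * d ≤ 4 * (r / 4) := by
                exact mul_le_mul_right ht 4
          _ = r := ENNReal.mul_div_cancel' (by norm_num) (by norm_num)
        have hdiamB : EMetric.diam (EMetric.ball x (2 * d)) ≤ 4 * d := by
          refine (EMetric.diam_ball).trans ?_
          rw [← mul_assoc]; norm_num
        have h1 : OuterMeasure.mkMetric'.pre τS r t
            ≤ τS (EMetric.ball x (2 * d)) :=
          ((OuterMeasure.mkMetric'.pre τS r).mono hsub).trans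
            (OuterMeasure.mkMetric'.pre_le (hdiamB.trans h4d))
        set B := EMetric.ball x (2 * d) with hB
        have hsB : (dimH t).toReal ≤ (dimH B).toReal :=
          ENNReal.toReal_mono (hdimne _) (dimH_mono hsub)
        have hsD : (dimH t).toReal ≤ D.toReal :=
          ENNReal.toReal_mono hDne (dimH_mono (subset_univ t))
        have h2 : τS B ≤ c * τH t := by
          have hball : ∃ x' : X, ∃ r' : ℝ≥0∞, B = EMetric.ball x' r' := ⟨x, 2 * d, rfl⟩
          simp only [hτS, hτH]
          rw [if_pos hball, epow_of_ne_top _ (hdimne B), epow_of_ne_top _ (hdimne t)]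
          calc EMetric.diam B ^ (dimH B).toReal
              ≤ EMetric.diam B ^ (dimH t).toReal :=
                ENNReal.rpow_le_rpow_of_exponent_ge
                  ((hdiamB.trans h4d).trans hr1) hsB
          _ ≤ (4 * d) ^ (dimH t).toReal :=
                ENNReal.rpow_le_rpow hdiamB ENNReal.toReal_nonneg
          _ = 4 ^ (dimH t).toReal * d ^ (dimH t).toReal :=
                ENNReal.mul_rpow_of_nonneg _ _ ENNReal.toReal_nonneg
          _ ≤ c * d ^ (dimH t).toReal := by
                exact mul_le_mul_left
                  (ENNReal.rpow_le_rpow_of_exponent_le (by norm_num) hsD) _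
        exact h1.trans h2
    · rw [iInf_eq_if, if_neg ht, ENNReal.mul_top hc0]
      exact le_top
  -- second inequality at outer measure level
  have hOM2 : (OuterMeasure.mkMetric' τS : OuterMeasure X)
      ≤ c • OuterMeasure.mkMetric' τH := by
    refine iSup₂_le fun r hr => ?_
    set r' : ℝ≥0∞ := min r 1 with hr'
    have hr'0 : 0 < r' := lt_min hr zero_lt_one
    have hr'1 : r' ≤ 1 := min_le_right _ _
    have hr'4 : 0 < r' / 4 := ENNReal.div_pos hr'0.ne' (by norm_num)
    calc OuterMeasure.mkMetric'.pre τS r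
        ≤ OuterMeasure.mkMetric'.pre τS r' :=
          OuterMeasure.mkMetric'.mono_pre _ (min_le_left _ _)
    _ ≤ c • OuterMeasure.mkMetric'.pre τH (r' / 4) := key r' hr'0 hr'1
    _ ≤ c • OuterMeasure.mkMetric' τH := by
          intro s
          simp only [OuterMeasure.smul_apply, smul_eq_mul]
          exact mul_le_mul_right
            ((le_iSup₂_of_le (r' / 4) hr'4 le_rfl :
              OuterMeasure.mkMetric'.pre τH (r' / 4) ≤ OuterMeasure.mkMetric' τH) s) c
  -- first inequality at outer measure level
  have hOM1 : (OuterMeasure.mkMetric' τH : OuterMeasure X)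
      ≤ OuterMeasure.mkMetric' τS := by
    refine mkMetric'_mono_weight fun s => ?_
    rw [hτS]; simp only
    split_ifs with h
    · exact le_rfl
    · exact le_top
  -- pass to measures on the measurable set A
  have hH : locHausdorff X A = OuterMeasure.mkMetric' τH A :=
    toMeasure_apply _ (OuterMeasure.mkMetric'_isMetric _).le_caratheodory hA
  have hS : locSpherical X A = OuterMeasure.mkMetric' τS A :=
    toMeasure_apply _ (OuterMeasure.mkMetric'_isMetric _).le_caratheodory hA
  constructor
  · rw [hH, hS]; exact hOM1 A
  · rw [hH, hS]
    have := hOM2 A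
    simpa [smul_eq_mul] using this
end

section
/- Let X be a metric space with Hausdorff dimension d₀ = dim_H(X). Then the d₀-dimensional Hausdorff measure H^{d₀} is absolutely continuous with respect to the local Hausdorff measure H_loc: every Borel set N with H_loc(N) = 0 satisfies H^{d₀}(N) = 0. -/
open Set MeasureTheory ENNReal

/-! `H^{d₀}` and `H_loc` are both Carathéodory constructions, so it suffices to compare their
weights on small sets: a set `U` with `|U| ≤ 1` has `dim_H U ≤ d₀`, hence `|U|^{d₀} ≤ |U|^{dim_H U}`.
In fact `H^{d₀} ≤ H_loc` on every set. -/

theorem rpow_le_epow_of_le_one {a b : ℝ≥0∞} {d : ℝ} (hd : 0 ≤ d) (ha : a ≤ 1)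
    (hb : b ≤ ENNReal.ofReal d) : a ^ d ≤ epow a b := by
  have hb_ne_top : b ≠ ⊤ := (hb.trans_lt ofReal_lt_top).ne
  rw [epow, if_neg hb_ne_top]
  refine ENNReal.rpow_le_rpow_of_exponent_ge ha ?_
  simpa [ENNReal.toReal_ofReal hd] using ENNReal.toReal_mono ofReal_ne_top hb

namespace MeasureTheory

variable {X : Type*} [EMetricSpace X]

theorem OuterMeasure.mkMetric'_mono_of_ediam_le {m₁ m₂ : Set X → ℝ≥0∞} {r : ℝ≥0∞}
    (hr : 0 < r) (h : ∀ s : Set X, Metric.ediam s ≤ r → m₁ s ≤ m₂ s) :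
    (mkMetric' m₁ : OuterMeasure X) ≤ mkMetric' m₂ := by
  refine iSup₂_le fun ε hε => ?_
  calc mkMetric'.pre m₁ ε
      ≤ mkMetric'.pre m₁ (min ε r) := mkMetric'.mono_pre _ (min_le_left _ _)
    _ ≤ mkMetric'.pre m₂ (min ε r) := mkMetric'.le_pre.2 fun s hs =>
        (mkMetric'.pre_le hs).trans (h s (hs.trans (min_le_right _ _)))
    _ ≤ mkMetric' m₂ := le_iSup₂_of_le (min ε r) (lt_min hε hr) le_rfl

theorem Measure.mkMetric'_mono_of_ediam_le [MeasurableSpace X] [BorelSpace X]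
    {m₁ m₂ : Set X → ℝ≥0∞} {r : ℝ≥0∞} (hr : 0 < r)
    (h : ∀ s : Set X, Metric.ediam s ≤ r → m₁ s ≤ m₂ s) :
    Measure.mkMetric' m₁ ≤ Measure.mkMetric' m₂ := by
  refine Measure.le_iff.2 fun s hs => ?_
  simp only [Measure.mkMetric', toMeasure_apply _ _ hs]
  exact OuterMeasure.mkMetric'_mono_of_ediam_le hr h s

end MeasureTheory

theorem hausdorffMeasure_le_locHausdorff {X : Type*} [MetricSpace X] [MeasurableSpace X]
    [BorelSpace X] {d : ℝ} (hd : 0 ≤ d) (hdim : dimH (univ : Set X) ≤ ENNReal.ofReal d) :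
    μH[d] ≤ locHausdorff X :=
  Measure.mkMetric'_mono_of_ediam_le one_pos fun s hs =>
    rpow_le_epow_of_le_one hd hs ((dimH_mono (subset_univ s)).trans hdim)

/-- If `d₀ = dim_H X`, then `H^{d₀}` is absolutely continuous with respect to the local
Hausdorff measure: every Borel set of `H_loc`-measure zero has `H^{d₀}`-measure zero. -/
theorem hausdorff_ac_locHausdorff {X : Type*} [MetricSpace X] [MeasurableSpace X]
    [BorelSpace X] (d₀ : ℝ) (h0 : 0 ≤ d₀)
    (hd : dimH (univ : Set X) = ENNReal.ofReal d₀) :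
    ∀ N : Set X, MeasurableSet N → locHausdorff X N = 0 → μH[d₀] N = 0 :=
  fun _ _ hN => Measure.absolutelyContinuous_of_le (hausdorffMeasure_le_locHausdorff h0 hd.le) hN
end

section
/- If X is a compact metric space, then there exists x ∈ X with dim_loc(x) = dim_H(X); i.e., the supremum of the local Hausdorff dimension is attained. -/
open Set MeasureTheory ENNReal

/-- The local Hausdorff dimension: `dim_loc(x) = inf { dim_H U : U open neighborhood of x }`. -/
noncomputable def dimLoc {X : Type*} [MetricSpace X] [MeasurableSpace X] [BorelSpace X]
    (x : X) : ℝ≥0∞ :=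
  ⨅ (U : Set X) (_ : IsOpen U) (_ : x ∈ U), dimH U

/-- In a compact metric space the supremum of the local Hausdorff dimension is attained:
there is a point whose local dimension equals the Hausdorff dimension of the space. -/
theorem exists_dimLoc_eq_dimH {X : Type*} [MetricSpace X] [MeasurableSpace X]
    [BorelSpace X] [CompactSpace X] [Nonempty X] :
    ∃ x : X, dimLoc x = dimH (univ : Set X) := by
  by_contra h
  push_neg at h
  have hle : ∀ x : X, dimLoc x ≤ dimH (univ : Set X) := fun x => by
    refine iInf_le_of_le univ ?_
    simp [dimLoc]
  have hlt : ∀ x : X, dimLoc x < dimH (univ : Set X) :=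
    fun x => lt_of_le_of_ne (hle x) (h x)
  have key : ∀ x : X, ∃ U : Set X, IsOpen U ∧ x ∈ U ∧ dimH U < dimH (univ : Set X) := by
    intro x
    have hx := hlt x
    simp only [dimLoc, iInf_lt_iff] at hx
    obtain ⟨U, hUo, hxU, hU⟩ := hx
    exact ⟨U, hUo, hxU, hU⟩
  choose U hUo hxU hUd using key
  obtain ⟨t, ht⟩ := isCompact_univ.elim_finite_subcover U hUo
    (fun x _ => mem_iUnion.mpr ⟨x, hxU x⟩)
  have htne : t.Nonempty := by
    by_contra hte
    rw [Finset.not_nonempty_iff_eq_empty] at hte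
    obtain ⟨x⟩ := ‹Nonempty X›
    have := ht (mem_univ x)
    simp [hte] at this
  obtain ⟨x, hxt, hmax⟩ := t.exists_mem_eq_sup htne (fun x => dimH (U x))
  have hsub : dimH (univ : Set X) ≤ dimH (U x) := by
    calc dimH (univ : Set X) ≤ dimH (⋃ y ∈ (↑t : Set X), U y) := by
          refine dimH_mono (ht.trans ?_)
          simp
    _ ≤ ⨆ y ∈ (↑t : Set X), dimH (U y) := (dimH_bUnion t.countable_toSet _).le
    _ = t.sup (fun y => dimH (U y)) := by
          rw [Finset.sup_eq_iSup]
          simp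
    _ = dimH (U x) := hmax
  exact absurd (hsub.trans_lt (hUd x)) (lt_irrefl _)
end

section
/- Let X be a compact metric space, Q : X → [0,∞) continuous, and suppose X is Q-amenable, i.e., 0 < λ^{Q_c}(B) < ∞ for every non-empty open ball B of finite radius, where λ^{Q_c} is the spherical measure with weight |B_r(x)|^{Q(x)}. Then dim_loc(x) = Q(x) for all x ∈ X. -/
open Set MeasureTheory ENNReal

/-- The spherical Carathéodory measure `λ^{Q_c}` with weight `|B_r(x)|^{Q(x)}` on open
balls (weight `∞` for sets that are not open balls, realized as an infimum over ball
representations). -/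
noncomputable def lambdaQc (X : Type*) [MetricSpace X] [MeasurableSpace X] [BorelSpace X]
    (Q : X → ℝ) : Measure X :=
  Measure.mkMetric'
    (fun U => ⨅ (x : X) (r : ℝ≥0∞) (_ : U = EMetric.ball x r), EMetric.diam U ^ Q x)

/-!
By continuity `Q` stays close to `Q x` on small balls `A` about `x`. If `Q ≤ s` near `A`, every
small ball meeting `A` has weight `|B|^{Q(center)} ≥ |B|^s`, so `μH[s] A ≤ λ^{Q_c} A < ∞` and
`dim_H A ≤ s`. If `Q ≥ s` on `A`, each small set `t` of a Hausdorff cover of `A` can be traded for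
a ball about a point of `t ∩ A` of diameter barely above `2 |t|`, so `λ^{Q_c} A ≤ 2^s μH[s] A`,
and `λ^{Q_c} A > 0` forces `dim_H A ≥ s`.
-/

open Metric Filter Topology
open scoped NNReal

namespace MeasureTheory.OuterMeasure

variable {X : Type*} [EMetricSpace X]

theorem mkMetric'.smul_pre {c : ℝ≥0∞} (hc₀ : c ≠ 0) (hc : c ≠ ∞) (m : Set X → ℝ≥0∞)
    (r : ℝ≥0∞) : c • mkMetric'.pre m r = mkMetric'.pre (c • m) r := by
  rw [mkMetric'.pre, mkMetric'.pre, smul_boundedBy hc]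
  congr 1 with t
  by_cases ht : ediam t ≤ r <;> simp [extend, ht, ENNReal.mul_top hc₀]

theorem mkMetric'.pre_apply_le_mul_pre {m₁ m₂ : Set X → ℝ≥0∞} {r₁ r₂ c : ℝ≥0∞} {A : Set X}
    (hc₀ : c ≠ 0) (hc : c ≠ ∞)
    (h : ∀ t, (t ∩ A).Nonempty → ediam t ≤ r₂ → pre m₁ r₁ (t ∩ A) ≤ c * m₂ t) :
    pre m₁ r₁ A ≤ c * pre m₂ r₂ A := by
  have hle : restrict A (pre m₁ r₁) ≤ pre (c • m₂) r₂ := le_pre.2 fun t ht => by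
    rw [restrict_apply]
    rcases (t ∩ A).eq_empty_or_nonempty with hA | hA
    · simp [hA]
    · exact h t hA ht
  simpa [restrict_apply, ← smul_pre hc₀ hc] using hle A

theorem mkMetric'_apply_le_mul {m₁ m₂ : Set X → ℝ≥0∞} {c : ℝ≥0∞} {A : Set X}
    (hc₀ : c ≠ 0) (hc : c ≠ ∞)
    (h : ∀ r₁ > 0, ∃ r₂ > 0, ∀ t, (t ∩ A).Nonempty → ediam t ≤ r₂ →
      mkMetric'.pre m₁ r₁ (t ∩ A) ≤ c * m₂ t) :
    mkMetric' m₁ A ≤ c * mkMetric' m₂ A := by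
  simp only [mkMetric', iSup_apply]
  refine iSup₂_le fun r₁ hr₁ => ?_
  obtain ⟨r₂, hr₂, h⟩ := h r₁ hr₁
  exact (mkMetric'.pre_apply_le_mul_pre hc₀ hc h).trans
    (by gcongr; exact le_iSup₂ (f := fun r _ => mkMetric'.pre m₂ r A) r₂ hr₂)

end MeasureTheory.OuterMeasure

open MeasureTheory.OuterMeasure

section LambdaQc

variable {X : Type*} [MetricSpace X]

noncomputable def ballWeight (Q : X → ℝ) (U : Set X) : ℝ≥0∞ :=
  ⨅ (x : X) (r : ℝ≥0∞) (_ : U = eball x r), ediam U ^ Q x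

theorem ballWeight_eball_le (Q : X → ℝ) (x : X) (r : ℝ≥0∞) :
    ballWeight Q (eball x r) ≤ ediam (eball x r) ^ Q x :=
  iInf₂_le_of_le x r (iInf_le _ rfl)

theorem pre_ballWeight_eball_le {Q : X → ℝ} {a : X} {s : ℝ} (hs : 0 ≤ s) (hQ : s ≤ Q a)
    {r ρ : ℝ≥0∞} (hr : 2 * r ≤ min ρ 1) :
    mkMetric'.pre (ballWeight Q) ρ (eball a r) ≤ (2 * r) ^ s := by
  have hdiam : ediam (eball a r) ≤ min ρ 1 := ediam_eball_le.trans hr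
  calc mkMetric'.pre (ballWeight Q) ρ (eball a r)
      ≤ ballWeight Q (eball a r) := mkMetric'.pre_le (hdiam.trans (min_le_left _ _))
    _ ≤ ediam (eball a r) ^ Q a := ballWeight_eball_le Q a r
    _ ≤ ediam (eball a r) ^ s :=
        ENNReal.rpow_le_rpow_of_exponent_ge (hdiam.trans (min_le_right _ _)) hQ
    _ ≤ (2 * r) ^ s := ENNReal.rpow_le_rpow ediam_eball_le hs

variable [MeasurableSpace X] [BorelSpace X]

theorem lambdaQc_apply (Q : X → ℝ) {A : Set X} (hA : MeasurableSet A) :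
    lambdaQc X Q A = mkMetric' (ballWeight Q) A :=
  toMeasure_apply _ (mkMetric'_isMetric _).le_caratheodory hA

theorem hausdorffMeasure_apply_eq_mkMetric' (d : ℝ) (A : Set X) :
    μH[d] A = mkMetric' (fun t => ediam t ^ d) A := by
  rw [Measure.hausdorffMeasure, ← OuterMeasure.coe_mkMetric]
  rfl

theorem hausdorffMeasure_le_lambdaQc {Q : X → ℝ} {A : Set X} (hA : MeasurableSet A) {s : ℝ}
    {r₀ : ℝ≥0∞} (hr₀ : 0 < r₀) (hQ : ∀ a ∈ A, ∀ y ∈ closedEBall a r₀, Q y ≤ s) :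
    μH[s] A ≤ lambdaQc X Q A := by
  rw [hausdorffMeasure_apply_eq_mkMetric', lambdaQc_apply Q hA]
  refine (mkMetric'_apply_le_mul one_ne_zero one_ne_top fun r hr =>
    ⟨min r (min r₀ 1), lt_min hr (lt_min hr₀ one_pos), fun t ⟨a, hat, haA⟩ ht => ?_⟩).trans_eq
    (one_mul _)
  calc mkMetric'.pre (fun t => ediam t ^ s) r (t ∩ A)
      ≤ mkMetric'.pre (fun t => ediam t ^ s) r t := measure_mono inter_subset_left
    _ ≤ ediam t ^ s := mkMetric'.pre_le (ht.trans (min_le_left _ _))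
    _ ≤ 1 * ballWeight Q t := by
      rw [one_mul]
      refine le_iInf₂ fun y ρ => le_iInf fun hty => ?_
      have hρ : 0 < ρ := pos_of_gt (mem_eball.1 (hty ▸ hat : a ∈ eball y ρ))
      have hyt : y ∈ t := hty ▸ mem_eball_self hρ
      have hya : edist y a ≤ r₀ := (edist_le_ediam_of_mem hyt hat).trans
        (ht.trans ((min_le_right _ _).trans (min_le_left _ _)))
      exact ENNReal.rpow_le_rpow_of_exponent_ge
        (ht.trans ((min_le_right _ _).trans (min_le_right _ _))) (hQ a haA y hya)

theorem lambdaQc_le_two_rpow_mul_hausdorffMeasure {Q : X → ℝ} {A : Set X}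
    (hA : MeasurableSet A) {s : ℝ} (hs : 0 ≤ s) (hQ : ∀ a ∈ A, s ≤ Q a) :
    lambdaQc X Q A ≤ 2 ^ s * μH[s] A := by
  rw [hausdorffMeasure_apply_eq_mkMetric', lambdaQc_apply Q hA]
  refine mkMetric'_apply_le_mul (by simp) (by simp) fun ρ hρ => ?_
  have hρ₁ : min ρ 1 ≠ ∞ := ne_top_of_le_ne_top ENNReal.one_ne_top (min_le_right _ _)
  have hr₂ : 0 < min ρ 1 / 4 := ENNReal.div_pos (lt_min hρ one_pos).ne' (by norm_num)
  refine ⟨min ρ 1 / 4, hr₂, fun t ⟨a, hat, haA⟩ ht => ?_⟩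
  have hd : ediam t ≠ ∞ := ne_top_of_le_ne_top (ENNReal.div_lt_top hρ₁ (by norm_num)).ne ht
  -- A ball about `a` of radius `ediam t + e` covers `t ∩ A`; the factor `2 ^ s` survives `e → 0`.
  have hball : ∀ e ∈ Ioc 0 (min ρ 1 / 4),
      mkMetric'.pre (ballWeight Q) ρ (t ∩ A) ≤ (2 * (ediam t + e)) ^ s := by
    rintro e ⟨he, he'⟩
    refine (measure_mono fun z hz => ?_).trans (pre_ballWeight_eball_le hs (hQ a haA) ?_)
    · exact (edist_le_ediam_of_mem hz.1 hat).trans_lt (ENNReal.lt_add_right hd he.ne')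
    · calc 2 * (ediam t + e) ≤ 2 * (2 * (min ρ 1 / 4)) := by rw [two_mul (_ / 4)]; gcongr
        _ = 4 * (min ρ 1 / 4) := by ring
        _ ≤ min ρ 1 := ENNReal.mul_div_le
  have hlim : Tendsto (fun e => (2 * (ediam t + e)) ^ s) (𝓝[>] 0) (𝓝 ((2 * ediam t) ^ s)) := by
    have hcont : Continuous fun e : ℝ≥0∞ => (2 * (ediam t + e)) ^ s :=
      ENNReal.continuous_rpow_const.comp <|
        (ENNReal.continuous_const_mul ENNReal.ofNat_ne_top).comp (continuous_const.add continuous_id)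
    simpa using (hcont.tendsto 0).mono_left nhdsWithin_le_nhds
  rw [← ENNReal.mul_rpow_of_nonneg _ _ hs]
  exact ge_of_tendsto hlim (Filter.mem_of_superset (Ioc_mem_nhdsGT hr₂) hball)

end LambdaQc

theorem dimLoc_le_of_lt {X : Type*} [MetricSpace X] [MeasurableSpace X] [BorelSpace X]
    {Q : X → ℝ} {x : X} (hQ : ContinuousAt Q x)
    (hfin : ∀ r : ℝ≥0∞, 0 < r → r < ∞ → lambdaQc X Q (eball x r) < ∞) {s : ℝ≥0}
    (hs : Q x < s) : dimLoc x ≤ s := by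
  obtain ⟨η, hη, hηQ⟩ := EMetric.mem_nhds_iff.1 (hQ.eventually (gt_mem_nhds hs))
  set δ := min (η / 2) 1
  have hδ : 0 < δ := lt_min (ENNReal.half_pos hη.ne') one_pos
  have hδ_top : δ ≠ ∞ := ne_top_of_le_ne_top ENNReal.one_ne_top (min_le_right _ _)
  have hQ_near : ∀ a ∈ eball x δ, ∀ y ∈ closedEBall a δ, Q y ≤ s := fun a ha y hy =>
    le_of_lt <| hηQ <| calc
      edist y x ≤ edist y a + edist a x := edist_triangle _ _ _
      _ < δ + δ := ENNReal.add_lt_add_of_le_of_lt (ne_top_of_le_ne_top hδ_top hy) hy ha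
      _ ≤ η / 2 + η / 2 := by gcongr <;> exact min_le_left _ _
      _ = η := ENNReal.add_halves η
  have hH : μH[s] (eball x δ) ≠ ∞ :=
    ((hausdorffMeasure_le_lambdaQc isOpen_eball.measurableSet hδ hQ_near).trans_lt
      (hfin δ hδ hδ_top.lt_top)).ne
  exact (iInf₂_le_of_le _ isOpen_eball (iInf_le _ (mem_eball_self hδ))).trans
    (dimH_le_of_hausdorffMeasure_ne_top hH)

theorem le_dimLoc_of_lt {X : Type*} [MetricSpace X] [MeasurableSpace X] [BorelSpace X]
    {Q : X → ℝ} {x : X} (hQ : ContinuousAt Q x)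
    (hpos : ∀ r : ℝ≥0∞, 0 < r → r < ∞ → 0 < lambdaQc X Q (eball x r)) {s : ℝ≥0}
    (hs : s < Q x) : (s : ℝ≥0∞) ≤ dimLoc x := by
  obtain ⟨η, hη, hηQ⟩ := EMetric.mem_nhds_iff.1 (hQ.eventually (lt_mem_nhds hs))
  refine le_iInf₂ fun U hU => le_iInf fun hxU => ?_
  obtain ⟨δ', hδ', hδ'U⟩ := EMetric.isOpen_iff.1 hU x hxU
  set δ := min (min η δ') 1
  have hδ : 0 < δ := lt_min (lt_min hη hδ') one_pos
  have hδ_top : δ < ∞ := (min_le_right _ _).trans_lt ENNReal.one_lt_top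
  have hsub : ∀ {ε}, δ ≤ ε → eball x δ ⊆ eball x ε := fun h => eball_subset_eball h
  have hcmp := lambdaQc_le_two_rpow_mul_hausdorffMeasure isOpen_eball.measurableSet s.coe_nonneg
    fun a ha => (hηQ (hsub ((min_le_left _ _).trans (min_le_left _ _)) ha)).le
  have hH : μH[s] (eball x δ) ≠ 0 := fun h0 =>
    (hpos δ hδ hδ_top).ne' (le_antisymm (by simpa [h0] using hcmp) bot_le)
  exact (le_dimH_of_hausdorffMeasure_ne_zero hH).trans
    (dimH_mono ((hsub ((min_le_left _ _).trans (min_le_right _ _))).trans hδ'U))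

theorem dimLoc_eq_of_amenable_general {X : Type*} [MetricSpace X] [MeasurableSpace X]
    [BorelSpace X] (Q : X → ℝ)
    (hQcont : Continuous Q)
    (ham : ∀ (x : X) (r : ℝ≥0∞), 0 < r → r < ⊤ → (EMetric.ball x r).Nonempty →
      0 < lambdaQc X Q (EMetric.ball x r) ∧ lambdaQc X Q (EMetric.ball x r) < ⊤) :
    ∀ x : X, dimLoc x = ENNReal.ofReal (Q x) := by
  intro x
  have hQx : ContinuousAt Q x := hQcont.continuousAt
  refine le_antisymm (le_of_forall_gt_imp_ge_of_dense fun c hc => ?_)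
    (ENNReal.le_of_forall_nnreal_lt fun s hs => ?_)
  · obtain ⟨s, hQs, hsc⟩ := ENNReal.lt_iff_exists_nnreal_btwn.1 hc
    refine (dimLoc_le_of_lt hQx (fun r hr hr_top => ?_) ?_).trans hsc.le
    · exact (ham x r hr hr_top ⟨x, mem_eball_self hr⟩).2
    · exact lt_of_not_ge fun h => (ENNReal.ofReal_le_ofReal h).not_gt (by simpa using hQs)
  · exact le_dimLoc_of_lt hQx
      (fun r hr hr_top => (ham x r hr hr_top ⟨x, mem_eball_self hr⟩).1)
      (ENNReal.coe_lt_ofReal.1 hs)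

/-- If `X` is compact, `Q : X → [0,∞)` is continuous and `X` is `Q`-amenable
(`0 < λ^{Q_c}(B) < ∞` for every nonempty open ball `B` of finite radius), then
`dim_loc(x) = Q(x)` for all `x`. -/
theorem dimLoc_eq_of_amenable {X : Type*} [MetricSpace X] [MeasurableSpace X]
    [BorelSpace X] [CompactSpace X] (Q : X → ℝ) (hQ0 : ∀ x, 0 ≤ Q x)
    (hQcont : Continuous Q)
    (ham : ∀ (x : X) (r : ℝ≥0∞), 0 < r → r < ⊤ → (EMetric.ball x r).Nonempty →
      0 < lambdaQc X Q (EMetric.ball x r) ∧ lambdaQc X Q (EMetric.ball x r) < ⊤) :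
    ∀ x : X, dimLoc x = ENNReal.ofReal (Q x) :=
  dimLoc_eq_of_amenable_general Q hQcont ham
end

section
/- Let X be a compact metric space and Q : X → (0,∞) log-Hölder continuous. If Q̃ : {open balls} → [0,∞) satisfies Q⁻(B) ≤ Q̃(B) ≤ Q⁺(B) for every open ball B (where Q⁻, Q⁺ are the inf and sup of Q over B), then the spherical measures λ^{Q⁺}, λ^{Q⁻}, λ^{Q̃} are pairwise strongly equivalent. -/
open Set MeasureTheory ENNReal Classical

/-- The spherical Carathéodory measure with a set-dependent exponent `F` on balls:
weight `|B|^{F(B)}` for open balls `B`, and `∞` off the class of open balls. -/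
noncomputable def sphW (X : Type*) [MetricSpace X] [MeasurableSpace X] [BorelSpace X]
    (F : Set X → ℝ) : Measure X :=
  Measure.mkMetric'
    (fun U => if ∃ x : X, ∃ r : ℝ≥0∞, U = EMetric.ball x r then EMetric.diam U ^ F U else ⊤)

/-- Two Borel measures are strongly equivalent if they are two-sidedly comparable with a
uniform (finite, positive) constant on all Borel sets. -/
def StrongEquiv {X : Type*} [MeasurableSpace X] (μ ν : Measure X) : Prop :=
  ∃ K : ℝ≥0∞, 0 < K ∧ K ≠ ⊤ ∧ ∀ A : Set X, MeasurableSet A → μ A ≤ K * ν A ∧ ν A ≤ K * μ A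

theorem mkMetric'_le_smul_aux {X : Type*} [EMetricSpace X] {m₁ m₂ : Set X → ℝ≥0∞} {c : ℝ≥0∞}
    (hc : c ≠ ∞) (h0 : c ≠ 0) {r₀ : ℝ≥0∞} (hr₀ : 0 < r₀)
    (h : ∀ s : Set X, s.Nonempty → EMetric.diam s ≤ r₀ → m₁ s ≤ c * m₂ s) (s : Set X) :
    OuterMeasure.mkMetric' m₁ s ≤ c * OuterMeasure.mkMetric' m₂ s := by
  classical
  refine le_of_tendsto_of_tendsto (OuterMeasure.mkMetric'.tendsto_pre _ s)
      (ENNReal.Tendsto.const_mul (OuterMeasure.mkMetric'.tendsto_pre _ s) (Or.inr hc))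
      (Filter.mem_of_superset (Ioo_mem_nhdsGT_of_mem ⟨le_rfl, hr₀⟩) fun r' hr' => ?_)
  simp only [mem_setOf_eq, OuterMeasure.mkMetric'.pre]
  rw [← smul_eq_mul, ← OuterMeasure.smul_apply, OuterMeasure.smul_boundedBy hc]
  refine (OuterMeasure.le_boundedBy'.2 fun t ht => (OuterMeasure.boundedBy_le _).trans ?_) _
  simp only [extend, iInf_eq_if, Pi.smul_apply, smul_eq_mul]
  split_ifs with hdiam
  · exact h t ht (hdiam.trans hr'.2.le)
  · rw [ENNReal.mul_top h0]

/-- For `X` compact and `Q : X → (0,∞)` log-Hölder continuous, if a ball-weight function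
`Q̃` satisfies `Q⁻(B) ≤ Q̃(B) ≤ Q⁺(B)` for every nonempty open ball `B`, then the
spherical measures `λ^{Q⁺}`, `λ^{Q⁻}`, `λ^{Q̃}` are pairwise strongly equivalent. -/
theorem sphW_pairwise_strongEquiv {X : Type*} [MetricSpace X] [MeasurableSpace X]
    [BorelSpace X] [CompactSpace X] (Q : X → ℝ) (hQpos : ∀ x, 0 < Q x)
    (C : ℝ) (hC : 0 < C)
    (hlog : ∀ x y : X, 0 < dist x y → dist x y < 1 / 2 →
      |Q x - Q y| ≤ -C / Real.log (dist x y))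
    (Qt : Set X → ℝ)
    (hQt : ∀ (x : X) (r : ℝ≥0∞), (EMetric.ball x r).Nonempty →
      (⨅ y : ↥(EMetric.ball x r), Q y) ≤ Qt (EMetric.ball x r) ∧
      Qt (EMetric.ball x r) ≤ ⨆ y : ↥(EMetric.ball x r), Q y) :
    StrongEquiv (sphW X fun U => ⨆ y : ↥U, Q y) (sphW X fun U => ⨅ y : ↥U, Q y) ∧
    StrongEquiv (sphW X fun U => ⨅ y : ↥U, Q y) (sphW X Qt) ∧
    StrongEquiv (sphW X fun U => ⨆ y : ↥U, Q y) (sphW X Qt) := by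
  classical
  -- continuity of Q
  have hQcont : Continuous Q := by
    rw [Metric.continuous_iff]
    intro b ε hε
    refine ⟨min (1 / 2) (Real.exp (-(2 * C / ε))), lt_min (by norm_num) (Real.exp_pos _),
      fun a ha => ?_⟩
    by_cases hd : dist a b = 0
    · have hab : a = b := by rwa [dist_eq_zero] at hd
      simpa [hab] using hε
    · have hd0 : 0 < dist a b := lt_of_le_of_ne dist_nonneg (Ne.symm hd)
      have h2 : dist a b < 1 / 2 := lt_of_lt_of_le ha (min_le_left _ _)
      have hbound := hlog a b hd0 h2
      have hlt : dist a b < Real.exp (-(2 * C / ε)) := lt_of_lt_of_le ha (min_le_right _ _)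
      have hlog' : Real.log (dist a b) < -(2 * C / ε) := by
        calc Real.log (dist a b) < Real.log (Real.exp (-(2 * C / ε))) :=
              Real.log_lt_log hd0 hlt
          _ = -(2 * C / ε) := Real.log_exp _
      have hlogneg : Real.log (dist a b) < 0 := by
        have : 0 < 2 * C / ε := by positivity
        linarith
      have hfin : -C / Real.log (dist a b) < ε := by
        rw [div_lt_iff_of_neg hlogneg]
        have h1 : 2 * C / ε < -Real.log (dist a b) := by linarith
        have h2' : ε * (2 * C / ε) = 2 * C := by field_simp
        nlinarith
      calc dist (Q a) (Q b) = |Q a - Q b| := Real.dist_eq _ _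
        _ ≤ -C / Real.log (dist a b) := hbound
        _ < ε := hfin
  set K : ℝ≥0∞ := ENNReal.ofReal (Real.exp C) with hK
  have hK0 : K ≠ 0 := by
    simp [hK, ENNReal.ofReal_eq_zero, not_le, Real.exp_pos]
  have hKtop : K ≠ ⊤ := ENNReal.ofReal_ne_top
  have hKpos : 0 < K := pos_iff_ne_zero.2 hK0
  set w : (Set X → ℝ) → Set X → ℝ≥0∞ := fun F U =>
    if ∃ x : X, ∃ r : ℝ≥0∞, U = EMetric.ball x r then EMetric.diam U ^ F U else ⊤ with hw
  -- sandwich predicate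
  set Sand : (Set X → ℝ) → Prop := fun F =>
    ∀ (x : X) (r : ℝ≥0∞), (EMetric.ball x r).Nonempty →
      (⨅ y : ↥(EMetric.ball x r), Q y) ≤ F (EMetric.ball x r) ∧
      F (EMetric.ball x r) ≤ ⨆ y : ↥(EMetric.ball x r), Q y with hSand
  have hbddR : BddAbove (range Q) := by
    have := isCompact_univ.bddAbove_image hQcont.continuousOn
    rwa [image_univ] at this
  -- the key weight comparison
  have main : ∀ F G : Set X → ℝ, Sand F → Sand G →
      ∀ s : Set X, s.Nonempty → EMetric.diam s ≤ ENNReal.ofReal (1 / 4) →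
        w F s ≤ K * w G s := by
    intro F G hF hG s hs hdiam
    by_cases hball : ∃ x : X, ∃ r : ℝ≥0∞, s = EMetric.ball x r
    · simp only [hw, if_pos hball]
      obtain ⟨x, r, rfl⟩ := hball
      obtain ⟨hF1, hF2⟩ := hF x r hs
      obtain ⟨hG1, hG2⟩ := hG x r hs
      set B := EMetric.ball x r with hB
      obtain ⟨y₀, hy₀⟩ := hs
      haveI hne : Nonempty B := ⟨⟨y₀, hy₀⟩⟩
      obtain ⟨x₀, -, hx₀⟩ := isCompact_univ.exists_isMinOn ⟨y₀, mem_univ _⟩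
        hQcont.continuousOn
      have hbddB : BddBelow (range fun y : B => Q y) :=
        ⟨0, by rintro - ⟨y, rfl⟩; exact (hQpos _).le⟩
      have hbddA : BddAbove (range fun y : B => Q y) :=
        hbddR.mono (range_comp_subset_range _ _)
      have hmpos : 0 < ⨅ y : B, Q y :=
        lt_of_lt_of_le (hQpos x₀) (le_ciInf fun y => hx₀ (mem_univ (y:X)))
      have hFpos : 0 < F B := lt_of_lt_of_le hmpos hF1
      have hGpos : 0 < G B := lt_of_lt_of_le hmpos hG1
      by_cases hD : EMetric.diam B = 0
      · rw [hD, ENNReal.zero_rpow_of_pos hFpos, ENNReal.zero_rpow_of_pos hGpos]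
        simp
      · have hDtop : EMetric.diam B ≠ ⊤ :=
          (lt_of_le_of_lt hdiam ENNReal.ofReal_lt_top).ne
        set D' : ℝ := (EMetric.diam B).toReal with hD'
        have hD'pos : 0 < D' := ENNReal.toReal_pos hD hDtop
        have hD'le : D' ≤ 1 / 4 := ENNReal.toReal_le_of_le_ofReal (by norm_num) hdiam
        have hlogD : Real.log D' < 0 := Real.log_neg hD'pos (by linarith)
        -- oscillation bound
        have hosc : ∀ y z : B, |Q ↑y - Q ↑z| ≤ C / (-Real.log D') := by
          intro y z
          have hdle : dist (y : X) (z : X) ≤ D' := by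
            rw [dist_edist]
            exact ENNReal.toReal_mono hDtop (EMetric.edist_le_diam_of_mem y.2 z.2)
          by_cases hyz : dist (y : X) (z : X) = 0
          · have : (y : X) = (z : X) := by rwa [dist_eq_zero] at hyz
            rw [this, sub_self, abs_zero]
            exact div_nonneg hC.le (by linarith)
          · have hdist0 : 0 < dist (y : X) (z : X) := lt_of_le_of_ne dist_nonneg (Ne.symm hyz)
            have hdlt : dist (y : X) (z : X) < 1 / 2 := lt_of_le_of_lt hdle (by linarith)
            have h1 := hlog y z hdist0 hdlt
            have hlogle : Real.log (dist (y : X) (z : X)) ≤ Real.log D' :=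
              Real.log_le_log hdist0 hdle
            have hlogd : Real.log (dist (y : X) (z : X)) < 0 :=
              Real.log_neg hdist0 (by linarith)
            calc |Q ↑y - Q ↑z| ≤ -C / Real.log (dist (y : X) (z : X)) := h1
              _ = C / (-Real.log (dist (y : X) (z : X))) := by rw [neg_div, div_neg]
              _ ≤ C / (-Real.log D') := by
                  apply div_le_div_of_nonneg_left hC.le (by linarith) (by linarith)
              _ = C / (-Real.log D') := rfl
        have hsupinf : (⨆ y : B, Q ↑y) ≤ (⨅ y : B, Q ↑y) + C / (-Real.log D') := by
          refine ciSup_le fun y => ?_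
          have : Q ↑y - C / (-Real.log D') ≤ ⨅ z : B, Q ↑z :=
            le_ciInf fun z => by linarith [(abs_le.1 (hosc y z)).2]
          linarith
        have habs : |F B - G B| ≤ C / (-Real.log D') := by
          have hFs : F B ≤ ⨆ y : B, Q ↑y := hF2
          have hGs : G B ≤ ⨆ y : B, Q ↑y := hG2
          refine abs_le.2 ⟨by linarith, by linarith⟩
        have hFG : (F B - G B) * Real.log D' ≤ C := by
          have h1 : (F B - G B) * Real.log D' = (G B - F B) * (-Real.log D') := by ring
          have h2 : (G B - F B) * (-Real.log D') ≤ (C / (-Real.log D')) * (-Real.log D') := by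
            refine mul_le_mul_of_nonneg_right ?_ (by linarith)
            exact le_trans (le_abs_self _) (by rwa [abs_sub_comm])
          have h3 : (C / (-Real.log D')) * (-Real.log D') = C :=
            div_mul_cancel₀ _ (by linarith)
          linarith
        have hDD : EMetric.diam B = ENNReal.ofReal D' := (ENNReal.ofReal_toReal hDtop).symm
        rw [hDD, ENNReal.ofReal_rpow_of_pos hD'pos, ENNReal.ofReal_rpow_of_pos hD'pos, hK,
          ← ENNReal.ofReal_mul (Real.exp_pos C).le]
        apply ENNReal.ofReal_le_ofReal
        rw [Real.rpow_def_of_pos hD'pos, Real.rpow_def_of_pos hD'pos, ← Real.exp_add]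
        exact Real.exp_le_exp.2 (by nlinarith)
    · simp only [hw, if_neg hball]
      rw [ENNReal.mul_top hK0]
  -- outer-measure comparison
  have outer : ∀ F G : Set X → ℝ, Sand F → Sand G →
      ∀ s : Set X, OuterMeasure.mkMetric' (w F) s ≤ K * OuterMeasure.mkMetric' (w G) s := by
    intro F G hF hG
    exact mkMetric'_le_smul_aux hKtop hK0 (by simp : (0:ℝ≥0∞) < ENNReal.ofReal (1/4))
      (main F G hF hG)
  -- measure values on measurable sets
  have meas : ∀ (F : Set X → ℝ) (A : Set X), MeasurableSet A →
      sphW X F A = OuterMeasure.mkMetric' (w F) A := by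
    intro F A hA
    exact toMeasure_apply _ ((OuterMeasure.mkMetric'_isMetric _).le_caratheodory) hA
  -- sandwich certificates
  have hsand_sup : Sand fun U => ⨆ y : ↥U, Q y := by
    intro x r hne
    obtain ⟨y₀, hy₀⟩ := hne
    haveI : Nonempty (EMetric.ball x r) := ⟨⟨y₀, hy₀⟩⟩
    have hbddB : BddBelow (range fun y : EMetric.ball x r => Q y) :=
      ⟨0, by rintro - ⟨y, rfl⟩; exact (hQpos _).le⟩
    have hbddA : BddAbove (range fun y : EMetric.ball x r => Q y) :=
      hbddR.mono (range_comp_subset_range _ _)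
    exact ⟨le_trans (ciInf_le hbddB ⟨y₀, hy₀⟩) (le_ciSup hbddA ⟨y₀, hy₀⟩), le_rfl⟩
  have hsand_inf : Sand fun U => ⨅ y : ↥U, Q y := by
    intro x r hne
    obtain ⟨y₀, hy₀⟩ := hne
    haveI : Nonempty (EMetric.ball x r) := ⟨⟨y₀, hy₀⟩⟩
    have hbddB : BddBelow (range fun y : EMetric.ball x r => Q y) :=
      ⟨0, by rintro - ⟨y, rfl⟩; exact (hQpos _).le⟩
    have hbddA : BddAbove (range fun y : EMetric.ball x r => Q y) :=
      hbddR.mono (range_comp_subset_range _ _)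
    exact ⟨le_rfl, le_trans (ciInf_le hbddB ⟨y₀, hy₀⟩) (le_ciSup hbddA ⟨y₀, hy₀⟩)⟩
  have hsand_Qt : Sand Qt := hQt
  have pair : ∀ F G : Set X → ℝ, Sand F → Sand G → StrongEquiv (sphW X F) (sphW X G) := by
    intro F G hF hG
    refine ⟨K, hKpos, hKtop, fun A hA => ?_⟩
    rw [meas F A hA, meas G A hA]
    exact ⟨outer F G hF hG A, outer G F hG hF A⟩
  exact ⟨pair _ _ hsand_sup hsand_inf, pair _ _ hsand_inf hsand_Qt, pair _ _ hsand_sup hsand_Qt⟩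
end

section
/- If ν is an Ahlfors Q-regular Borel measure on a metric space X (with Q : X → (0,∞) bounded), then Q is log-Hölder continuous; in particular Q is continuous. -/
open Set MeasureTheory ENNReal

private lemma real_est {c M Qx Qy d : ℝ} (hc : 0 < c) (hd : 0 < d) (hd2 : d < 1/2)
    (hQyM : Qy ≤ M) (h : d ^ Qx ≤ c ^ 2 * (2 * d) ^ Qy) :
    Qy - Qx ≤ (Real.log (c ^ 2) + M * Real.log 2) / (-Real.log d) := by
  have hld : Real.log d < 0 := Real.log_neg hd (by linarith)
  have h2d : (0:ℝ) < 2 * d := by linarith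
  have hc2 : (0:ℝ) < c ^ 2 := by positivity
  have hlog := Real.log_le_log (Real.rpow_pos_of_pos hd _) h
  rw [Real.log_rpow hd, Real.log_mul (ne_of_gt hc2) (ne_of_gt (Real.rpow_pos_of_pos h2d _)),
    Real.log_rpow h2d, Real.log_mul two_ne_zero (ne_of_gt hd)] at hlog
  have hM2 : Qy * Real.log 2 ≤ M * Real.log 2 :=
    mul_le_mul_of_nonneg_right hQyM (Real.log_nonneg (by norm_num))
  rw [le_div_iff₀ (by linarith)]
  nlinarith [hlog, hM2]

/-- If `ν` is an Ahlfors `Q`-regular Borel measure on a metric space `X` (with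
`Q : X → (0,∞)` bounded), then `Q` is log-Hölder continuous; in particular `Q` is
continuous. -/
theorem logHolder_of_ahlforsRegular {X : Type*} [MetricSpace X] [MeasurableSpace X]
    [BorelSpace X] (ν : Measure X) (Q : X → ℝ) (hQpos : ∀ x, 0 < Q x)
    (M : ℝ) (hQbdd : ∀ x, Q x ≤ M)
    (C : ℝ≥0∞) (hC0 : 0 < C) (hCt : C ≠ ⊤)
    (hreg : ∀ (x : X) (r : ℝ), 0 < r → ENNReal.ofReal r ≤ EMetric.diam (univ : Set X) →
      C⁻¹ * ν (Metric.ball x r) ≤ ENNReal.ofReal (r ^ Q x) ∧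
      ENNReal.ofReal (r ^ Q x) ≤ C * ν (Metric.ball x r)) :
    (∃ C' : ℝ, 0 < C' ∧ ∀ x y : X, 0 < dist x y → dist x y < 1 / 2 →
      |Q x - Q y| ≤ -C' / Real.log (dist x y)) ∧ Continuous Q := by
  set E := EMetric.diam (univ : Set X) with hE
  set c := C.toReal with hc_def
  have hc : 0 < c := ENNReal.toReal_pos hC0.ne' hCt
  set A := Real.log (c ^ 2) + M * Real.log 2 with hA
  set D := E.toReal with hD
  set B := M * Real.log (2 / D) with hB
  set C' := max 1 (max A B) with hC'def
  have hC'pos : (0:ℝ) < C' := lt_of_lt_of_le one_pos (le_max_left _ _)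
  -- the key geometric estimate, valid when 2d ≤ diam
  have key : ∀ x y : X, 0 < dist x y → dist x y < 1/2 →
      ENNReal.ofReal (2 * dist x y) ≤ E →
      Q y - Q x ≤ A / (-Real.log (dist x y)) := by
    intro x y hd hd2 hE2
    have hdE : ENNReal.ofReal (dist x y) ≤ E := by
      rw [← edist_dist]
      exact EMetric.edist_le_diam_of_mem (mem_univ _) (mem_univ _)
    obtain ⟨-, h1⟩ := hreg x (dist x y) hd hdE
    obtain ⟨h2, -⟩ := hreg y (2 * dist x y) (by linarith) hE2
    have hsub : Metric.ball x (dist x y) ⊆ Metric.ball y (2 * dist x y) :=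
      Metric.ball_subset_ball' (by linarith)
    have hmono : ν (Metric.ball x (dist x y)) ≤ ν (Metric.ball y (2 * dist x y)) :=
      measure_mono hsub
    have hν2 : ν (Metric.ball y (2 * dist x y)) ≤ C * ENNReal.ofReal ((2 * dist x y) ^ Q y) := by
      have h3 := mul_le_mul_right h2 C
      rwa [← mul_assoc, ENNReal.mul_inv_cancel hC0.ne' hCt, one_mul] at h3
    have hchain : ENNReal.ofReal ((dist x y) ^ Q x) ≤
        C * (C * ENNReal.ofReal ((2 * dist x y) ^ Q y)) :=
      h1.trans ((mul_le_mul_right hmono C).trans (mul_le_mul_right hν2 C))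
    have hCof : C = ENNReal.ofReal c := (ENNReal.ofReal_toReal hCt).symm
    rw [hCof, ← ENNReal.ofReal_mul hc.le, ← ENNReal.ofReal_mul hc.le,
      ENNReal.ofReal_le_ofReal_iff (by positivity)] at hchain
    rw [← mul_assoc, ← pow_two] at hchain
    exact real_est hc hd hd2 (hQbdd y) hchain
  have part1 : ∀ x y : X, 0 < dist x y → dist x y < 1 / 2 →
      |Q x - Q y| ≤ -C' / Real.log (dist x y) := by
    intro x y hd hd2
    have hL : Real.log (dist x y) < 0 := Real.log_neg hd (by linarith)
    rw [neg_div, ← div_neg]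
    by_cases hcase : ENNReal.ofReal (2 * dist x y) ≤ E
    · have k1 := key x y hd hd2 hcase
      have k2 := key y x (by rwa [dist_comm]) (by rwa [dist_comm]) (by rwa [dist_comm])
      rw [dist_comm y x] at k2
      have hA' : A ≤ C' := le_trans (le_max_left _ _) (le_max_right _ _)
      have hpos : 0 < -Real.log (dist x y) := by linarith
      have hdiv : A / (-Real.log (dist x y)) ≤ C' / (-Real.log (dist x y)) := by gcongr
      rw [abs_sub_le_iff]
      exact ⟨k2.trans hdiv, k1.trans hdiv⟩
    · push_neg at hcase
      have hpos : 0 < -Real.log (dist x y) := by linarith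
      have hEt : E ≠ ⊤ := ne_top_of_lt hcase
      have hdE : ENNReal.ofReal (dist x y) ≤ E := by
        rw [← edist_dist]
        exact EMetric.edist_le_diam_of_mem (mem_univ _) (mem_univ _)
      have hdD : dist x y ≤ D := (ENNReal.ofReal_le_iff_le_toReal hEt).mp hdE
      have hD2 : D < 2 * dist x y := by
        have h4 := (ENNReal.toReal_lt_toReal hEt ENNReal.ofReal_ne_top).mpr hcase
        rwa [ENNReal.toReal_ofReal (by linarith)] at h4
      have hDpos : 0 < D := lt_of_lt_of_le hd hdD
      have hM : 0 < M := lt_of_lt_of_le (hQpos x) (hQbdd x)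
      have hQab : |Q x - Q y| ≤ M :=
        abs_le.mpr ⟨by linarith [hQpos x, hQbdd y], by linarith [hQpos y, hQbdd x]⟩
      have hl1 : Real.log (D / 2) ≤ Real.log (dist x y) :=
        Real.log_le_log (by positivity) (by linarith)
      have hl2 : Real.log (D / 2) = Real.log D - Real.log 2 :=
        Real.log_div (ne_of_gt hDpos) two_ne_zero
      have hl3 : Real.log (2 / D) = Real.log 2 - Real.log D :=
        Real.log_div two_ne_zero (ne_of_gt hDpos)
      have hlog2D : -Real.log (dist x y) ≤ Real.log (2 / D) := by linarith
      have hB' : B ≤ C' := le_trans (le_max_right A B) (le_max_right 1 _)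
      rw [le_div_iff₀ hpos]
      have s1 : |Q x - Q y| * (-Real.log (dist x y)) ≤ M * (-Real.log (dist x y)) :=
        mul_le_mul_of_nonneg_right hQab hpos.le
      have s2 : M * (-Real.log (dist x y)) ≤ M * Real.log (2 / D) :=
        mul_le_mul_of_nonneg_left hlog2D hM.le
      calc |Q x - Q y| * (-Real.log (dist x y)) ≤ B := by rw [hB]; linarith
        _ ≤ C' := hB'
  refine ⟨⟨C', hC'pos, part1⟩, ?_⟩
  rw [Metric.continuous_iff]
  intro b ε hε
  refine ⟨min (1/4) (Real.exp (-C'/ε)), by positivity, fun a hab => ?_⟩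
  by_cases h0 : a = b
  · subst h0; simpa using hε
  · have hdpos : 0 < dist a b := dist_pos.mpr h0
    have hd2 : dist a b < 1/2 :=
      lt_of_lt_of_le hab (le_trans (min_le_left _ _) (by norm_num))
    have hL : Real.log (dist a b) < 0 := Real.log_neg hdpos (by linarith)
    have hH := part1 a b hdpos hd2
    have hde : dist a b < Real.exp (-C'/ε) := lt_of_lt_of_le hab (min_le_right _ _)
    have hlog : Real.log (dist a b) < -(C'/ε) := by
      have h5 := Real.log_lt_log hdpos hde
      rwa [Real.log_exp, neg_div] at h5
    have hCe : 0 < C'/ε := div_pos hC'pos hε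
    have hfin : -C' / Real.log (dist a b) < ε := by
      rw [neg_div, ← div_neg, div_lt_iff₀ (by linarith : (0:ℝ) < -Real.log (dist a b))]
      have h6 : C'/ε < -Real.log (dist a b) := by linarith
      have h7 := mul_lt_mul_of_pos_left h6 hε
      have h8 : ε * (C'/ε) = C' := by field_simp
      linarith
    rw [Real.dist_eq]
    exact lt_of_le_of_lt hH hfin
end
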